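/- For the operator X_1 = \bar{D}^{-1} (d/dt_v) \bar{D} written as X_1 = \sum_{j\ge 0} x_j \partial/\partial t_j with x_0 = 1 and x_j = \bar{D}^{-1}(\partial f_{j-1}/\partial t_v) for j ≥ 1, the coefficients satisfy the product formula x_{j+1} = x_1 \cdot D(x_1) \cdot D^2(x_1) \cdots D^j(x_1), equivalently x_{j+1} = x_j \cdot D^j(x_1). -/

import Mathlib

/-!
`D̄⁻¹` is a ring automorphism commuting with `D`, so applying it to the chain-rule recursion
`g (j+1) = D^{j+1}(g 0) · g j` gives `x (j+2) = x (j+1) · D^{j+1}(x 1)`; with `x 0 = 1` this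
telescopes to the product formula.
-/

theorem stmt1 {R : Type*} [CommRing R]
    (D : R →+* R) (Dbar : R ≃+* R)
    (hcomm : ∀ r : R, Dbar (D r) = D (Dbar r))
    (g : ℕ → R)                                        -- `g j = ∂fⱼ/∂t_v`
    (hg : ∀ j, g (j+1) = (fun r => D r)^[j+1] (g 0) * g j)
    (x : ℕ → R)
    (hx0 : x 0 = 1)
    (hx : ∀ j, x (j+1) = Dbar.symm (g j)) :
    (∀ j, x (j+1) = x j * (fun r => D r)^[j] (x 1)) ∧
    (∀ j, x (j+1) = ∏ i ∈ Finset.range (j+1), (fun r => D r)^[i] (x 1)) := by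
  have hsymm : Function.Commute Dbar.symm (fun r => D r) :=
    Function.Semiconj.inverse_left hcomm Dbar.left_inv Dbar.right_inv
  have step : ∀ j, x (j+1) = x j * (fun r => D r)^[j] (x 1) := by
    rintro (_ | j)
    · simp [hx0]
    · rw [hx (j+1), hg j, map_mul, (hsymm.iterate_right (j+1)).eq, ← hx 0, ← hx j, mul_comm]
  exact ⟨step, fun j => (Finset.prod_range_induction _ x hx0 (j+1) fun k _ => step k).symm⟩
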